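/- Let 0 < q < 1, ν ∈ ℝ, n ∈ ℤ and set ρ = iν + n. Define operators on functions f : ℂ∖{0} → ℂ by (Af)(z) = q^{(ρ−1)/2} f(q^{−1}z), (Bf)(z) = q^{ρ/2} (f(q^{−1}z) − f(qz)) / ((1−q²) z), (Cf)(z) = (z/(1−q²)) (−q^{(ρ+2)/2} f(q^{−1}z) + q^{−3ρ/2+3} f(qz)). Then the Casimir operator Ω_q = (q A² + q^{−1} A^{−2} − 2)/(q − q^{−1})² + C∘B, where (A²f)(z) = q^{ρ−1} f(q^{−2}z) and (A^{−2}f)(z) = q^{1−ρ} f(q²z), acts as the scalar ([−ρ/2]_q)², where [x]_q = (q^{x} − q^{−x})/(q − q^{−1}); that is, for every f and every z ≠ 0, (q (A²f)(z) + q^{−1} (A^{−2}f)(z) − 2 f(z))/(q − q^{−1})² + (C(Bf))(z) = ((q^{−ρ/2} − q^{ρ/2})/(q − q^{−1}))² · f(z). -/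

import Mathlib

/-- `q^w = exp(w ln q)` for real `q > 0` and complex `w`. -/
noncomputable def qpow (q : ℝ) (w : ℂ) : ℂ := Complex.exp (w * (Real.log q : ℂ))

/-- `(Af)(z) = q^{(ρ−1)/2} f(q⁻¹ z)`. -/
noncomputable def opA (q : ℝ) (ρ : ℂ) (f : ℂ → ℂ) : ℂ → ℂ :=
  fun z => qpow q ((ρ - 1) / 2) * f ((q : ℂ)⁻¹ * z)

/-- `(Bf)(z) = q^{ρ/2}(f(q⁻¹z) − f(qz))/((1−q²)z)`. -/
noncomputable def opB (q : ℝ) (ρ : ℂ) (f : ℂ → ℂ) : ℂ → ℂ :=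
  fun z => qpow q (ρ / 2) * (f ((q : ℂ)⁻¹ * z) - f ((q : ℂ) * z)) / ((1 - (q : ℂ) ^ 2) * z)

/-- `(Cf)(z) = (z/(1−q²))(−q^{(ρ+2)/2} f(q⁻¹z) + q^{−3ρ/2+3} f(qz))`. -/
noncomputable def opC (q : ℝ) (ρ : ℂ) (f : ℂ → ℂ) : ℂ → ℂ :=
  fun z => z / (1 - (q : ℂ) ^ 2) *
    (-(qpow q ((ρ + 2) / 2)) * f ((q : ℂ)⁻¹ * z) + qpow q (-(3 * ρ / 2) + 3) * f ((q : ℂ) * z))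

/-- `(A²f)(z) = q^{ρ−1} f(q⁻²z)`. -/
noncomputable def opA2 (q : ℝ) (ρ : ℂ) (f : ℂ → ℂ) : ℂ → ℂ :=
  fun z => qpow q (ρ - 1) * f (((q : ℂ) ^ 2)⁻¹ * z)

/-- `(A⁻²f)(z) = q^{1−ρ} f(q²z)`. -/
noncomputable def opAm2 (q : ℝ) (ρ : ℂ) (f : ℂ → ℂ) : ℂ → ℂ :=
  fun z => qpow q (1 - ρ) * f ((q : ℂ) ^ 2 * z)

/-!
Put `S = q^{ρ/2}`. Every coefficient in the definitions of `A^{±2}`, `B` and `C` is a monomial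
`S^k q^m`, and on the three values `a = f(q⁻²z)`, `b = f(z)`, `c = f(q²z)` one finds
`(q − q⁻¹)² (C∘B f)(z) = S²(b − a) + S⁻²(b − c)` while the `A^{±2}` part contributes
`S²a + S⁻²c − 2b`. In the sum `a` and `c` cancel, leaving `(S² + S⁻² − 2) b = (S⁻¹ − S)² b`.
-/

theorem qpow_neg (q : ℝ) (a : ℂ) : qpow q (-a) = (qpow q a)⁻¹ := by
  simp only [qpow, neg_mul, Complex.exp_neg]

theorem qpow_ne_zero (q : ℝ) (a : ℂ) : qpow q a ≠ 0 :=
  Complex.exp_ne_zero _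

theorem qpow_int_mul_add_int {q : ℝ} (hq : 0 < q) (a : ℂ) (k m : ℤ) :
    qpow q (k * a + m) = qpow q a ^ k * (q : ℂ) ^ m := by
  rw [qpow, add_mul, Complex.exp_add, mul_assoc, Complex.exp_int_mul, Complex.exp_int_mul,
    ← Complex.ofReal_exp, Real.exp_log hq, qpow]

theorem one_sub_ofReal_sq_ne_zero {q : ℝ} (hq : 0 < q) (hq1 : q ≠ 1) :
    1 - (q : ℂ) ^ 2 ≠ 0 := by
  rw [sub_ne_zero, ne_comm]
  exact_mod_cast (pow_eq_one_iff_of_nonneg hq.le two_ne_zero).not.mpr hq1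

theorem ofReal_mul_opA2_apply {q : ℝ} (hq : 0 < q) (ρ : ℂ) (f : ℂ → ℂ) (z : ℂ) :
    (q : ℂ) * opA2 q ρ f z = qpow q (ρ / 2) ^ 2 * f (((q : ℂ) ^ 2)⁻¹ * z) := by
  have hq' : (q : ℂ) ≠ 0 := Complex.ofReal_ne_zero.mpr hq.ne'
  rw [opA2, show ρ - 1 = ((2 : ℤ) : ℂ) * (ρ / 2) + ((-1 : ℤ) : ℂ) by push_cast; ring,
    qpow_int_mul_add_int hq]
  field_simp

theorem ofReal_inv_mul_opAm2_apply {q : ℝ} (hq : 0 < q) (ρ : ℂ) (f : ℂ → ℂ) (z : ℂ) :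
    (q : ℂ)⁻¹ * opAm2 q ρ f z = (qpow q (ρ / 2) ^ 2)⁻¹ * f ((q : ℂ) ^ 2 * z) := by
  have hq' : (q : ℂ) ≠ 0 := Complex.ofReal_ne_zero.mpr hq.ne'
  rw [opAm2, show 1 - ρ = ((-2 : ℤ) : ℂ) * (ρ / 2) + ((1 : ℤ) : ℂ) by push_cast; ring,
    qpow_int_mul_add_int hq]
  field_simp

theorem opC_opB_apply {q : ℝ} (hq : 0 < q) (hq1 : q ≠ 1) (ρ : ℂ) (f : ℂ → ℂ) {z : ℂ}
    (hz : z ≠ 0) :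
    opC q ρ (opB q ρ f) z =
      (qpow q (ρ / 2) ^ 2 * (f z - f (((q : ℂ) ^ 2)⁻¹ * z))
        + (qpow q (ρ / 2) ^ 2)⁻¹ * (f z - f ((q : ℂ) ^ 2 * z))) / ((q : ℂ) - (q : ℂ)⁻¹) ^ 2 := by
  have hq' : (q : ℂ) ≠ 0 := Complex.ofReal_ne_zero.mpr hq.ne'
  have hq2 := one_sub_ofReal_sq_ne_zero hq hq1
  have hS := qpow_ne_zero q (ρ / 2)
  have hqq : (q : ℂ) - (q : ℂ)⁻¹ = -(1 - (q : ℂ) ^ 2) / q := by field_simp; ring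
  rw [opC, opB, opB,
    show (ρ + 2) / 2 = ((1 : ℤ) : ℂ) * (ρ / 2) + ((1 : ℤ) : ℂ) by push_cast; ring,
    show -(3 * ρ / 2) + 3 = ((-3 : ℤ) : ℂ) * (ρ / 2) + ((3 : ℤ) : ℂ) by push_cast; ring,
    qpow_int_mul_add_int hq, qpow_int_mul_add_int hq,
    mul_inv_cancel_left₀ hq', inv_mul_cancel_left₀ hq', hqq,
    show (q : ℂ)⁻¹ * ((q : ℂ)⁻¹ * z) = ((q : ℂ) ^ 2)⁻¹ * z by ring,
    show (q : ℂ) * ((q : ℂ) * z) = (q : ℂ) ^ 2 * z by ring]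
  field_simp
  ring

theorem casimir_scalar_on_principal_series_general (q : ℝ) (hq0 : 0 < q) (hq1 : q < 1) (ρ : ℂ)
    (f : ℂ → ℂ) (z : ℂ) (hz : z ≠ 0) :
    ((q : ℂ) * opA2 q ρ f z + (q : ℂ)⁻¹ * opAm2 q ρ f z - 2 * f z)
        / ((q : ℂ) - (q : ℂ)⁻¹) ^ 2
      + opC q ρ (opB q ρ f) z
    = ((qpow q (-(ρ / 2)) - qpow q (ρ / 2)) / ((q : ℂ) - (q : ℂ)⁻¹)) ^ 2 * f z := by
  have hS := qpow_ne_zero q (ρ / 2)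
  rw [ofReal_mul_opA2_apply hq0, ofReal_inv_mul_opAm2_apply hq0,
    opC_opB_apply hq0 hq1.ne ρ f hz, ← add_div, qpow_neg, div_pow, div_mul_eq_mul_div]
  congr 1
  field_simp
  ring

/-- On the principal series `V_{ν,n}` the Casimir operator
`Ω_q = (qA² + q⁻¹A⁻² − 2)/(q−q⁻¹)² + C∘B` acts as the scalar `([−ρ/2]_q)²`
with `ρ = iν + n`, where `[x]_q = (q^x − q^{−x})/(q − q⁻¹)`. -/
theorem casimir_scalar_on_principal_series (q : ℝ) (hq0 : 0 < q) (hq1 : q < 1)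
    (ν : ℝ) (n : ℤ) (ρ : ℂ) (hρ : ρ = Complex.I * ν + n)
    (f : ℂ → ℂ) (z : ℂ) (hz : z ≠ 0) :
    ((q : ℂ) * opA2 q ρ f z + (q : ℂ)⁻¹ * opAm2 q ρ f z - 2 * f z)
        / ((q : ℂ) - (q : ℂ)⁻¹) ^ 2
      + opC q ρ (opB q ρ f) z
    = ((qpow q (-(ρ / 2)) - qpow q (ρ / 2)) / ((q : ℂ) - (q : ℂ)⁻¹)) ^ 2 * f z :=
  casimir_scalar_on_principal_series_general q hq0 hq1 ρ f z hz
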